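/- arXiv:1511.05070 — 5 statements merged into one kernel-verified Lean document; each statement's English description precedes it below -/
import Mathlib

section
/- Join-state lemma: Let M1, M2 be LTSRs over name sets N1, N2 respectively and let w be a finite string over Rec_{N1∪N2}(D). Then the join M1 ⋈ M2 reaches the product state set Q'1 × Q'2 from Q01 × Q02 on w if and only if M1 reaches Q'1 from Q01 on vis(w↓_{N1}) and M2 reaches Q'2 from Q02 on vis(w↓_{N2}). -/
open scoped Classical

variable {Name Data : Type}

/-- Records over name type `Name` and data type `Data`: partial functions. -/
abbrev Rcd (Name Data : Type) := Name → Option Data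

/-- The domain of a record. -/
def recDom (r : Rcd Name Data) : Set Name := {n | r n ≠ none}

/-- Restriction of a record to a name set. -/
noncomputable def recRestrict (r : Rcd Name Data) (N : Set Name) : Rcd Name Data :=
  fun n => if n ∈ N then r n else none

/-- Compatibility of records `r1 ∈ Rec_{N1}(D)` and `r2 ∈ Rec_{N2}(D)`. -/
def recComp (N1 N2 : Set Name) (r1 r2 : Rcd Name Data) : Prop :=
  recDom r1 ∩ N2 = recDom r2 ∩ N1 ∧
    ∀ n ∈ recDom r1 ∩ recDom r2, r1 n = r2 n

/-- Union of records: takes `r1`'s value on `dom r1`, else `r2`'s value. -/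
def recUnion (r1 r2 : Rcd Name Data) : Rcd Name Data :=
  fun n => (r1 n).orElse (fun _ => r2 n)
/-- A labeled transition system. -/
structure LTS (Q A : Type) where
  delta : Q → A → Set Q
  init : Set Q

variable {Q Q1 Q2 Q3 A : Type}

/-- The set of states reachable from a set of states by reading a finite string. -/
def reachSet (M : LTS Q A) : Set Q → List A → Set Q
  | S, [] => S
  | S, a :: w => reachSet M {q' | ∃ q ∈ S, q' ∈ M.delta q a} w

/-- A finite string is traceable in an LTS. -/
def finTraceable (M : LTS Q A) (w : List A) : Prop :=
  (reachSet M M.init w).Nonempty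

/-- An infinite string is traceable in an LTS. -/
def infTraceable (M : LTS Q A) (w : ℕ → A) : Prop :=
  ∃ ρ : ℕ → Q, ρ 0 ∈ M.init ∧ ∀ i, ρ (i + 1) ∈ M.delta (ρ i) (w i)

/-- A Büchi automaton. -/
structure BA (Q A : Type) where
  delta : Q → A → Set Q
  init : Set Q
  final : Set Q

def BA.toLTS (B : BA Q A) : LTS Q A := ⟨B.delta, B.init⟩

/-- The language of finite strings of a Büchi automaton regarded as an NFA. -/
def BA.Lf (B : BA Q A) (w : List A) : Prop :=
  (reachSet B.toLTS B.init w ∩ B.final).Nonempty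

/-- The Büchi language of infinite strings. -/
def BA.LB (B : BA Q A) (w : ℕ → A) : Prop :=
  ∃ ρ : ℕ → Q, ρ 0 ∈ B.init ∧ (∀ i, ρ (i + 1) ∈ B.delta (ρ i) (w i)) ∧
    ∀ n, ∃ m ≥ n, ρ m ∈ B.final

/-- An LTS of records (LTSR) over name set `N`: transitions only on records over `N`. -/
def ltsOver (M : LTS Q (Rcd Name Data)) (N : Set Name) : Prop :=
  ∀ q r, ¬ recDom r ⊆ N → M.delta q r = ∅

/-- A BAR over name set `N`: transitions only on records over `N`. -/
def baOver (B : BA Q (Rcd Name Data)) (N : Set Name) : Prop :=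
  ∀ q r, ¬ recDom r ⊆ N → B.delta q r = ∅

/-- A trapless LTS: every state has an outgoing transition. -/
def trapless (M : LTS Q A) : Prop :=
  ∀ q, ∃ a, (M.delta q a).Nonempty

/-- Pointwise restriction of a finite string of records to a name set. -/
noncomputable def strRestrict (w : List (Rcd Name Data)) (N : Set Name) :
    List (Rcd Name Data) :=
  w.map (fun r => recRestrict r N)

/-- The visible portion of a finite string: delete all invisible (empty-domain) records. -/
noncomputable def visList (w : List (Rcd Name Data)) : List (Rcd Name Data) :=
  w.filterMap (fun r => if (recDom r).Nonempty then some r else none)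

/-- `vis(w↓_N)` for a finite string `w`. -/
noncomputable def visRestrict (w : List (Rcd Name Data)) (N : Set Name) :
    List (Rcd Name Data) :=
  visList (strRestrict w N)

/-- The transition function of the join: a record advances each component on its
restriction to the component's name set when that restriction is visible, and
leaves the component unchanged otherwise. -/
noncomputable def joinDelta (N1 N2 : Set Name)
    (d1 : Q1 → Rcd Name Data → Set Q1) (d2 : Q2 → Rcd Name Data → Set Q2) :
    Q1 × Q2 → Rcd Name Data → Set (Q1 × Q2) :=
  fun p r =>
    {p' | p'.1 ∈ (if (recDom r ∩ N1).Nonempty then d1 p.1 (recRestrict r N1) else {p.1}) ∧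
          p'.2 ∈ (if (recDom r ∩ N2).Nonempty then d2 p.2 (recRestrict r N2) else {p.2})}

/-- Join of two LTSRs. -/
noncomputable def joinLTS (N1 N2 : Set Name)
    (M1 : LTS Q1 (Rcd Name Data)) (M2 : LTS Q2 (Rcd Name Data)) :
    LTS (Q1 × Q2) (Rcd Name Data) :=
  ⟨joinDelta N1 N2 M1.delta M2.delta, M1.init ×ˢ M2.init⟩

/-- The Büchi language of the join of two BARs: the generalized Büchi acceptance with
family `{F1 × Q2, Q1 × F2}`, i.e. both final-state sets occur infinitely often. -/
def joinLB (N1 N2 : Set Name)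
    (B1 : BA Q1 (Rcd Name Data)) (B2 : BA Q2 (Rcd Name Data)) (w : ℕ → Rcd Name Data) : Prop :=
  ∃ ρ : ℕ → Q1 × Q2, ρ 0 ∈ B1.init ×ˢ B2.init ∧
    (∀ i, ρ (i + 1) ∈ joinDelta N1 N2 B1.delta B2.delta (ρ i) (w i)) ∧
    (∀ n, ∃ m ≥ n, (ρ m).1 ∈ B1.final) ∧ (∀ n, ∃ m ≥ n, (ρ m).2 ∈ B2.final)

/-- The NFA language of the join of two BARs (final states `F1 × F2`). -/
noncomputable def joinLf (N1 N2 : Set Name)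
    (B1 : BA Q1 (Rcd Name Data)) (B2 : BA Q2 (Rcd Name Data)) (w : List (Rcd Name Data)) : Prop :=
  (reachSet (joinLTS N1 N2 B1.toLTS B2.toLTS) (B1.init ×ˢ B2.init) w ∩
      (B1.final ×ˢ B2.final)).Nonempty

lemma recDom_recRestrict (r : Rcd Name Data) (N : Set Name) :
    recDom (recRestrict r N) = recDom r ∩ N := by
  ext n
  simp only [recDom, recRestrict, Set.mem_setOf_eq, Set.mem_inter_iff]
  by_cases h : n ∈ N <;> simp [h]

lemma visRestrict_cons (r : Rcd Name Data) (w : List (Rcd Name Data)) (N : Set Name) :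
    visRestrict (r :: w) N =
      (if (recDom r ∩ N).Nonempty then [recRestrict r N] else []) ++ visRestrict w N := by
  simp only [visRestrict, strRestrict, visList, List.map_cons, List.filterMap_cons,
    recDom_recRestrict]
  by_cases h : (recDom r ∩ N).Nonempty <;> simp [h]

lemma join_reachSet_aux {Q1 Q2 : Type} (N1 N2 : Set Name)
    (M1 : LTS Q1 (Rcd Name Data)) (M2 : LTS Q2 (Rcd Name Data)) :
    ∀ (w : List (Rcd Name Data)) (S1 : Set Q1) (S2 : Set Q2),
    reachSet (joinLTS N1 N2 M1 M2) (S1 ×ˢ S2) w =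
      (reachSet M1 S1 (visRestrict w N1)) ×ˢ (reachSet M2 S2 (visRestrict w N2))
  | [], S1, S2 => by simp [visRestrict, strRestrict, visList, reachSet]
  | r :: w, S1, S2 => by
    rw [visRestrict_cons, visRestrict_cons]
    have hstep : {p' | ∃ p ∈ S1 ×ˢ S2, p' ∈ (joinLTS N1 N2 M1 M2).delta p r} =
        ((if (recDom r ∩ N1).Nonempty then {q' | ∃ q ∈ S1, q' ∈ M1.delta q (recRestrict r N1)}
            else S1) ×ˢ
         (if (recDom r ∩ N2).Nonempty then {q' | ∃ q ∈ S2, q' ∈ M2.delta q (recRestrict r N2)}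
            else S2)) := by
      ext ⟨q1, q2⟩
      by_cases h1 : (recDom r ∩ N1).Nonempty <;> by_cases h2 : (recDom r ∩ N2).Nonempty <;>
        simp only [joinLTS, joinDelta, Set.mem_setOf_eq, Set.mem_prod, h1, h2,
          if_true, if_false, Set.mem_singleton_iff] <;>
        constructor
      · rintro ⟨⟨p1, p2⟩, ⟨hp1, hp2⟩, h, h'⟩; exact ⟨⟨p1, hp1, h⟩, ⟨p2, hp2, h'⟩⟩
      · rintro ⟨⟨p1, hp1, h⟩, ⟨p2, hp2, h'⟩⟩; exact ⟨(p1, p2), ⟨hp1, hp2⟩, h, h'⟩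
      · rintro ⟨⟨p1, p2⟩, ⟨hp1, hp2⟩, h, h'⟩; exact ⟨⟨p1, hp1, h⟩, h' ▸ hp2⟩
      · rintro ⟨⟨p1, hp1, h⟩, hq2⟩; exact ⟨(p1, q2), ⟨hp1, hq2⟩, h, rfl⟩
      · rintro ⟨⟨p1, p2⟩, ⟨hp1, hp2⟩, h, h'⟩; exact ⟨h ▸ hp1, ⟨p2, hp2, h'⟩⟩
      · rintro ⟨hq1, ⟨p2, hp2, h'⟩⟩; exact ⟨(q1, p2), ⟨hq1, hp2⟩, rfl, h'⟩
      · rintro ⟨⟨p1, p2⟩, ⟨hp1, hp2⟩, h, h'⟩; exact ⟨h ▸ hp1, h' ▸ hp2⟩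
      · rintro ⟨hq1, hq2⟩; exact ⟨(q1, q2), ⟨hq1, hq2⟩, rfl, rfl⟩
    show reachSet (joinLTS N1 N2 M1 M2) _ w = _
    rw [show reachSet (joinLTS N1 N2 M1 M2)
          {p' | ∃ p ∈ S1 ×ˢ S2, p' ∈ (joinLTS N1 N2 M1 M2).delta p r} w =
        reachSet (joinLTS N1 N2 M1 M2) _ w from congrArg (fun S => reachSet _ S w) hstep]
    rw [join_reachSet_aux N1 N2 M1 M2 w]
    by_cases h1 : (recDom r ∩ N1).Nonempty <;> by_cases h2 : (recDom r ∩ N2).Nonempty <;>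
      simp [h1, h2, reachSet]

/-- join-state lemma: the states reached by `M1 ⋈ M2` from `Q01 × Q02`
reading a finite string `w` over `Rec_{N1∪N2}(D)` are exactly the product of the states
reached by `M1` on `vis(w↓_{N1})` and by `M2` on `vis(w↓_{N2})`: that is,
`M1 ⋈ M2 : Q01 × Q02 →^w Q1' × Q2'` iff `M1 : Q01 →^{vis(w↓N1)} Q1'` and
`M2 : Q02 →^{vis(w↓N2)} Q2'`. -/
theorem join_reachSet_eq_prod {Q1 Q2 : Type} (N1 N2 : Set Name)
    (M1 : LTS Q1 (Rcd Name Data)) (M2 : LTS Q2 (Rcd Name Data))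
    (w : List (Rcd Name Data)) (hw : ∀ r ∈ w, recDom r ⊆ N1 ∪ N2) :
    reachSet (joinLTS N1 N2 M1 M2) (M1.init ×ˢ M2.init) w =
      (reachSet M1 M1.init (visRestrict w N1)) ×ˢ
        (reachSet M2 M2.init (visRestrict w N2)) := by
  exact join_reachSet_aux N1 N2 M1 M2 w M1.init M2.init
end

section
/- If B1 and B2 are BARs (over the same name set N) with L_B(B1) = L_B(B2) and L_f(B1) = L_f(B2), then for every BAR B3, L_B(B1 ⋈ B3) = L_B(B2 ⋈ B3). -/
open scoped Classical

variable {Name Data : Type}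

variable {Q Q1 Q2 Q3 A : Type}

section AuxProof

variable {Q Q1 Q2 A : Type}

lemma reachSet_append' (M : LTS Q A) (w w' : List A) (S : Set Q) :
    reachSet M S (w ++ w') = reachSet M (reachSet M S w) w' := by
  induction w generalizing S with
  | nil => rfl
  | cons a t ih => simp [reachSet, ih]

lemma reach_path' (M : LTS Q A) (w : List A) (S : Set Q) (q' : Q)
    (h : q' ∈ reachSet M S w) :
    ∃ f : ℕ → Q, f 0 ∈ S ∧ f w.length = q' ∧
      ∀ i, (hi : i < w.length) → f (i + 1) ∈ M.delta (f i) w[i] := by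
  induction w generalizing S with
  | nil => exact ⟨fun _ => q', h, rfl, fun i hi => absurd hi (by simp)⟩
  | cons a t ih =>
    obtain ⟨f, hf0, hfl, hfs⟩ := ih _ h
    obtain ⟨q0, hq0, hq1⟩ := hf0
    refine ⟨fun i => Nat.rec q0 (fun j _ => f j) i, hq0, hfl, ?_⟩
    intro i hi
    cases i with
    | zero => exact hq1
    | succ j => exact hfs j (by simpa using hi)

/-- Scheduled-run transfer lemma. -/
lemma scheduled_transfer (B1 : BA Q1 A) (B2 : BA Q2 A)
    (hB : ∀ w, B1.LB w → B2.LB w) (hf : ∀ w, B1.Lf w → B2.Lf w)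
    (P : ℕ → Prop) (r : ℕ → A) (ρ1 : ℕ → Q1)
    (h0 : ρ1 0 ∈ B1.init)
    (hstepP : ∀ i, P i → ρ1 (i + 1) ∈ B1.delta (ρ1 i) (r i))
    (hstepN : ∀ i, ¬P i → ρ1 (i + 1) = ρ1 i)
    (hF : ∀ n, ∃ m ≥ n, ρ1 m ∈ B1.final) :
    ∃ ρ2 : ℕ → Q2, ρ2 0 ∈ B2.init ∧
      (∀ i, P i → ρ2 (i + 1) ∈ B2.delta (ρ2 i) (r i)) ∧
      (∀ i, ¬P i → ρ2 (i + 1) = ρ2 i) ∧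
      ∀ n, ∃ m ≥ n, ρ2 m ∈ B2.final := by
  have hconst : ∀ (ρ : ℕ → Q1) , (∀ i, ¬P i → ρ (i + 1) = ρ i) →
      ∀ a b, a ≤ b → (∀ i, a ≤ i → i < b → ¬ P i) → ρ b = ρ a := by
    intro ρ hN a b hab hno
    induction b, hab using Nat.le_induction with
    | base => rfl
    | succ b hab ih =>
      rw [hN b (hno b hab (Nat.lt_succ_self b))]
      exact ih (fun i h1 h2 => hno i h1 (Nat.lt_succ_of_lt h2))
  by_cases hinf : (setOf P).Infinite
  · -- Case A : infinitely many active steps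
    set t : ℕ → ℕ := Nat.nth P with ht
    have htP : ∀ k, P (t k) := Nat.nth_mem_of_infinite hinf
    have hmono : StrictMono t := Nat.nth_strictMono hinf
    have hcnt : ∀ {i}, P i → t (Nat.count P i) = i := fun h => Nat.nth_count h
    have hgap : ∀ k i, t k < i → i < t (k + 1) → ¬ P i := by
      intro k i h1 h2 hP
      rw [← hcnt hP] at h1 h2
      have := hmono.lt_iff_lt.mp h1
      have := hmono.lt_iff_lt.mp h2
      omega
    have hgap0 : ∀ i, i < t 0 → ¬ P i := by
      intro i h hP
      rw [← hcnt hP] at h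
      exact absurd (hmono.lt_iff_lt.mp h) (Nat.not_lt_zero _)
    set u : ℕ → A := fun k => r (t k) with hu
    set σ : ℕ → Q1 := fun k => ρ1 (t k) with hσ
    have hσ0 : σ 0 = ρ1 0 :=
      hconst ρ1 hstepN 0 (t 0) (Nat.zero_le _) (fun i _ h2 => hgap0 i h2)
    have hσstep : ∀ k, σ (k + 1) ∈ B1.delta (σ k) (u k) := by
      intro k
      have h1 : ρ1 (t (k + 1)) = ρ1 (t k + 1) :=
        hconst ρ1 hstepN (t k + 1) (t (k + 1)) (hmono (Nat.lt_succ_self k))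
          (fun i hi1 hi2 => hgap k i hi1 hi2)
      show ρ1 (t (k+1)) ∈ _
      rw [h1]
      exact hstepP (t k) (htP k)
    have hLB1 : B1.LB u := by
      refine ⟨σ, hσ0 ▸ h0, hσstep, ?_⟩
      intro n
      obtain ⟨m, hm, hmF⟩ := hF (t n)
      set k := Nat.count P m with hk
      have hkn : n ≤ k := by
        have := Nat.count_monotone P hm
        rwa [Nat.count_nth_of_infinite hinf n] at this
      have hmtk : m ≤ t k := by
        by_contra hlt
        push_neg at hlt
        have h1 : Nat.count P (t k + 1) ≤ Nat.count P m := Nat.count_monotone P hlt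
        rw [Nat.count_succ, if_pos (htP k), Nat.count_nth_of_infinite hinf k] at h1
        omega
      have : σ k = ρ1 m := by
        refine hconst ρ1 hstepN m (t k) hmtk (fun i hi1 hi2 hP => ?_)
        have h1 : k ≤ Nat.count P i := hk ▸ Nat.count_monotone P hi1
        rw [← hcnt hP] at hi2
        have := hmono.lt_iff_lt.mp hi2
        omega
      exact ⟨k, hkn, this ▸ hmF⟩
    obtain ⟨τ, hτ0, hτs, hτF⟩ := hB u hLB1
    refine ⟨fun m => τ (Nat.count P m), by simpa using hτ0, ?_, ?_, ?_⟩
    · intro i hPi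
      have h1 : Nat.count P (i + 1) = Nat.count P i + 1 := by
        rw [Nat.count_succ, if_pos hPi]
      have h2 : u (Nat.count P i) = r i := congrArg r (hcnt hPi)
      simpa [h1, h2] using hτs (Nat.count P i)
    · intro i hPi
      have h1 : Nat.count P (i + 1) = Nat.count P i := by
        simp [Nat.count_succ, hPi]
      show τ (Nat.count P (i + 1)) = τ (Nat.count P i)
      rw [h1]
    · intro n
      obtain ⟨m', hm', hF2⟩ := hτF n
      refine ⟨t m', le_trans hm' (hmono.le_apply), ?_⟩
      show τ (Nat.count P (Nat.nth P m')) ∈ B2.final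
      rwa [Nat.count_nth_of_infinite hinf m']
  · -- Case B : finitely many active steps
    rw [Set.not_infinite] at hinf
    obtain ⟨n0, hn0⟩ : ∃ n0, ∀ m, n0 ≤ m → ¬ P m := by
      obtain ⟨b, hb⟩ := hinf.bddAbove
      exact ⟨b + 1, fun m hm hP => absurd (hb hP) (by omega)⟩
    set v : ℕ → List A :=
      fun m => (List.range m).filterMap (fun i => if P i then some (r i) else none) with hv
    have hvsucc : ∀ m, v (m + 1) = v m ++ if P m then [r m] else [] := by
      intro m
      by_cases hP : P m <;>
        simp [hv, List.range_succ, List.filterMap_append, hP]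
    have hreach : ∀ m, ρ1 m ∈ reachSet B1.toLTS B1.init (v m) := by
      intro m
      induction m with
      | zero => exact h0
      | succ m ih =>
        rw [hvsucc m]
        by_cases hP : P m
        · rw [if_pos hP, reachSet_append']
          exact ⟨ρ1 m, ih, hstepP m hP⟩
        · rw [if_neg hP, List.append_nil, hstepN m hP]
          exact ih
    have hvconst : ∀ m, n0 ≤ m → v m = v n0 := by
      intro m hm
      induction m, hm using Nat.le_induction with
      | base => rfl
      | succ m hm ih => rw [hvsucc m, if_neg (hn0 m hm), List.append_nil, ih]
    have hvpre : ∀ a b, a ≤ b → v a <+: v b := by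
      intro a b hab
      induction b, hab using Nat.le_induction with
      | base => exact List.prefix_refl _
      | succ b _ ih => exact ih.trans (by rw [hvsucc b]; exact List.prefix_append _ _)
    have hLf1 : B1.Lf (v n0) := by
      obtain ⟨m, hm, hmF⟩ := hF n0
      have heq : ρ1 m = ρ1 n0 := hconst ρ1 hstepN n0 m hm (fun i hi _ => hn0 i hi)
      exact ⟨ρ1 n0, hreach n0, heq ▸ hmF⟩
    obtain ⟨q2, hq2r, hq2F⟩ := hf _ hLf1
    obtain ⟨f, hf0, hfl, hfs⟩ := reach_path' _ _ _ _ hq2r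
    refine ⟨fun m => f (v m).length, by simpa [hv] using hf0, ?_, ?_, ?_⟩
    · intro i hPi
      have hilt : i < n0 := by by_contra h; exact hn0 i (by omega) hPi
      have hpre : v i ++ [r i] <+: v n0 := by
        have := hvpre (i + 1) n0 hilt
        rwa [hvsucc i, if_pos hPi] at this
      obtain ⟨tl, htl⟩ := hpre
      have hlen : (v i).length < (v n0).length := by
        rw [← htl]; simp
      have hget : (v n0)[(v i).length]'(by omega) = r i := by
        rw [List.getElem_of_eq htl.symm]
        rw [List.getElem_append_left (by simp)]
        simp
      have hlen2 : (v (i+1)).length = (v i).length + 1 := by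
        rw [hvsucc i, if_pos hPi]; simp
      show f ((v (i + 1)).length) ∈ B2.delta (f ((v i).length)) (r i)
      rw [hlen2]
      have := hfs (v i).length hlen
      rwa [hget] at this
    · intro i hPi
      have : (v (i+1)).length = (v i).length := by
        rw [hvsucc i, if_neg hPi, List.append_nil]
      simp [this]
    · intro n
      refine ⟨max n n0, le_max_left _ _, ?_⟩
      show f ((v (max n n0)).length) ∈ B2.final
      rw [hvconst _ (le_max_right n n0), hfl]
      exact hq2F

end AuxProof

/-- One direction of the join-language transfer. -/
lemma join_dir {Q1 Q2 Q3 : Type} (N : Set Name)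
    (B1 : BA Q1 (Rcd Name Data)) (B2 : BA Q2 (Rcd Name Data))
    (hB : ∀ w : ℕ → Rcd Name Data, B1.LB w → B2.LB w)
    (hf : ∀ w : List (Rcd Name Data), B1.Lf w → B2.Lf w)
    (N3 : Set Name) (B3 : BA Q3 (Rcd Name Data)) (w : ℕ → Rcd Name Data)
    (h : joinLB N N3 B1 B3 w) : joinLB N N3 B2 B3 w := by
  obtain ⟨ρ, hinit, hstep, hF1, hF3⟩ := h
  set P : ℕ → Prop := fun i => (recDom (w i) ∩ N).Nonempty with hP
  have hstep1P : ∀ i, P i → (ρ (i+1)).1 ∈ B1.delta ((ρ i).1) (recRestrict (w i) N) := by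
    intro i hPi
    have h1 := (hstep i).1
    rwa [if_pos hPi] at h1
  have hstep1N : ∀ i, ¬P i → (ρ (i+1)).1 = (ρ i).1 := by
    intro i hPi
    have h1 := (hstep i).1
    rwa [if_neg hPi, Set.mem_singleton_iff] at h1
  obtain ⟨ρ2, h20, h2P, h2N, h2F⟩ :=
    scheduled_transfer B1 B2 hB hf P (fun i => recRestrict (w i) N)
      (fun m => (ρ m).1) hinit.1 hstep1P hstep1N hF1
  refine ⟨fun m => (ρ2 m, (ρ m).2), ⟨h20, hinit.2⟩, ?_, h2F, hF3⟩
  intro i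
  refine ⟨?_, ?_⟩
  · by_cases hPi : P i
    · rw [if_pos hPi]
      exact h2P i hPi
    · rw [if_neg hPi]
      exact h2N i hPi
  · exact (hstep i).2

/-- if BARs `B1`, `B2` over the same name set `N` have the same Büchi
language and the same NFA language, then joining with any BAR `B3` yields the same
Büchi language. -/
theorem same_LB_Lf_implies_join_LB_eq {Q1 Q2 : Type} (N : Set Name)
    (B1 : BA Q1 (Rcd Name Data)) (B2 : BA Q2 (Rcd Name Data))
    (h1 : baOver B1 N) (h2 : baOver B2 N)
    (hB : ∀ w : ℕ → Rcd Name Data, B1.LB w ↔ B2.LB w)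
    (hf : ∀ w : List (Rcd Name Data), B1.Lf w ↔ B2.Lf w) :
    ∀ {Q3 : Type} (N3 : Set Name) (B3 : BA Q3 (Rcd Name Data)), baOver B3 N3 →
      ∀ w : ℕ → Rcd Name Data, joinLB N N3 B1 B3 w ↔ joinLB N N3 B2 B3 w := by
  intro Q3 N3 B3 _ w
  constructor
  · exact join_dir N B1 B2 (fun w => (hB w).mp) (fun w => (hf w).mp) N3 B3 w
  · exact join_dir N B2 B1 (fun w => (hB w).mpr) (fun w => (hf w).mpr) N3 B3 w
end

section
/- Infinite-traces-based equivalence is a congruence for join on trapless LTSRs: if trapless LTSRs M1 and M2 have the same set of traceable infinite strings, then for every trapless LTSR M3, M1 ⋈ M3 and M2 ⋈ M3 have the same set of traceable infinite strings. -/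
open scoped Classical

variable {Name Data : Type}

variable {Q Q1 Q2 Q3 A : Type}

/-- Auxiliary: `Nat.count` is injective on the predicate's support. -/
lemma count_inj_aux {P : ℕ → Prop} [DecidablePred P] {i j : ℕ} (hi : P i) (hj : P j)
    (h : Nat.count P i = Nat.count P j) : i = j := by
  by_contra hne
  rcases lt_or_gt_of_ne hne with hlt | hlt
  · have h1 : Nat.count P (i + 1) ≤ Nat.count P j := Nat.count_monotone P hlt
    rw [Nat.count_succ, if_pos hi] at h1
    omega
  · have h1 : Nat.count P (j + 1) ≤ Nat.count P i := Nat.count_monotone P hlt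
    rw [Nat.count_succ, if_pos hj] at h1
    omega

/-- Auxiliary: de-stuttered run of the first component, extended via traplessness. -/
noncomputable def tauF {Q1 A : Type} (M1 : LTS Q1 A) (t1 : trapless M1)
    (P : ℕ → Prop) (ρ1 : ℕ → Q1) : ℕ → Q1
  | 0 => ρ1 0
  | k + 1 =>
    if h : ∃ i, P i ∧ Nat.count P i = k then ρ1 (h.choose + 1)
    else (t1 (tauF M1 t1 P ρ1 k)).choose_spec.choose

/-- Auxiliary: labels of the de-stuttered run. -/
noncomputable def labF {Q1 A : Type} (M1 : LTS Q1 A) (t1 : trapless M1)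
    (P : ℕ → Prop) (act : ℕ → A) (ρ1 : ℕ → Q1) (k : ℕ) : A :=
  if h : ∃ i, P i ∧ Nat.count P i = k then act h.choose
  else (t1 (tauF M1 t1 P ρ1 k)).choose

/-- One direction of the congruence. -/
lemma joinLTS_infTraceable_mono {Q1 Q2 Q3 : Type} (N N3 : Set Name)
    (M1 : LTS Q1 (Rcd Name Data)) (M2 : LTS Q2 (Rcd Name Data))
    (M3 : LTS Q3 (Rcd Name Data)) (t1 : trapless M1)
    (hit : ∀ w : ℕ → Rcd Name Data, infTraceable M1 w → infTraceable M2 w)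
    (w : ℕ → Rcd Name Data)
    (h : infTraceable (joinLTS N N3 M1 M3) w) :
    infTraceable (joinLTS N N3 M2 M3) w := by
  classical
  obtain ⟨ρ, hρ0, hρ⟩ := h
  set P : ℕ → Prop := fun i => (recDom (w i) ∩ N).Nonempty with hPdef
  have hρ1 : ∀ i, (ρ (i + 1)).1 ∈
      (if P i then M1.delta (ρ i).1 (recRestrict (w i) N) else {(ρ i).1}) :=
    fun i => (hρ i).1
  have hρ2 : ∀ i, (ρ (i + 1)).2 ∈
      (if (recDom (w i) ∩ N3).Nonempty then M3.delta (ρ i).2 (recRestrict (w i) N3)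
       else {(ρ i).2}) := fun i => (hρ i).2
  set τ : ℕ → Q1 := tauF M1 t1 P (fun i => (ρ i).1) with hτdef
  set u : ℕ → Rcd Name Data :=
    labF M1 t1 P (fun i => recRestrict (w i) N) (fun i => (ρ i).1) with hudef
  set c : ℕ → ℕ := Nat.count P with hcdef
  -- invariant: τ tracks the first component of ρ
  have key : ∀ i, τ (c i) = (ρ i).1 := by
    intro i
    induction i with
    | zero =>
      have : c 0 = 0 := Nat.count_zero P
      rw [this]; rfl
    | succ i ih =>
      by_cases hPi : P i
      · have hc : c (i + 1) = c i + 1 := by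
          rw [hcdef]; rw [Nat.count_succ, if_pos hPi]
        rw [hc]
        have hex : ∃ j, P j ∧ Nat.count P j = c i := ⟨i, hPi, rfl⟩
        have : τ (c i + 1) = (ρ (hex.choose + 1)).1 := by
          rw [hτdef]; rw [tauF, dif_pos hex]
        rw [this]
        have := hex.choose_spec
        have heq : hex.choose = i := count_inj_aux this.1 hPi this.2
        rw [heq]
      · have hc : c (i + 1) = c i := by
          rw [hcdef]; rw [Nat.count_succ, if_neg hPi]; omega
        have hst : (ρ (i + 1)).1 = (ρ i).1 := by
          have := hρ1 i
          rw [if_neg hPi] at this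
          exact this
        rw [hc, hst, ih]
  -- labels at active indices
  have keyu : ∀ i, P i → u (c i) = recRestrict (w i) N := by
    intro i hPi
    have hex : ∃ j, P j ∧ Nat.count P j = c i := ⟨i, hPi, rfl⟩
    have : u (c i) = recRestrict (w hex.choose) N := by
      rw [hudef]; rw [labF, dif_pos hex]
    rw [this]
    have hspec := hex.choose_spec
    rw [count_inj_aux hspec.1 hPi hspec.2]
  -- τ is a run of M1 on u
  have hrun : ∀ k, τ (k + 1) ∈ M1.delta (τ k) (u k) := by
    intro k
    by_cases hex : ∃ j, P j ∧ Nat.count P j = k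
    · have h1 : τ (k + 1) = (ρ (hex.choose + 1)).1 := by
        rw [hτdef]; rw [tauF, dif_pos hex]
      have h2 : u k = recRestrict (w hex.choose) N := by
        rw [hudef]; rw [labF, dif_pos hex]
      have hspec := hex.choose_spec
      have h3 : τ k = (ρ hex.choose).1 := by
        have hk := key hex.choose
        rw [hcdef] at hk
        rw [hspec.2] at hk
        exact hk
      rw [h1, h2, h3]
      have := hρ1 hex.choose
      rw [if_pos hspec.1] at this
      exact this
    · have h1 : τ (k + 1) = (t1 (τ k)).choose_spec.choose := by
        rw [hτdef]; rw [tauF, dif_neg hex]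
      have h2 : u k = (t1 (τ k)).choose := by
        rw [hudef]; rw [labF, dif_neg hex]
      rw [h1, h2]
      exact (t1 (τ k)).choose_spec.choose_spec
  -- u is infinitely traceable in M1, hence in M2
  have hτ0 : τ 0 = (ρ 0).1 := rfl
  have hM1 : infTraceable M1 u := ⟨τ, by rw [hτ0]; exact hρ0.1, hrun⟩
  obtain ⟨σ, hσ0, hσ⟩ := hit u hM1
  -- assemble the run of M2 ⋈ M3
  refine ⟨fun i => (σ (c i), (ρ i).2), ⟨hσ0, hρ0.2⟩, ?_⟩
  intro i
  constructor
  · show σ (c (i + 1)) ∈ _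
    by_cases hPi : P i
    · have hc : c (i + 1) = c i + 1 := by
        rw [hcdef]; rw [Nat.count_succ, if_pos hPi]
      rw [if_pos hPi, hc, ← keyu i hPi]
      exact hσ (c i)
    · have hc : c (i + 1) = c i := by
        rw [hcdef]; rw [Nat.count_succ, if_neg hPi]; omega
      rw [if_neg hPi, hc]
      exact rfl
  · exact hρ2 i

/-- infinite-traces-based equivalence is a congruence for join on trapless
LTSRs: if trapless `M1 ≈_it M2`, then for every trapless LTSR `M3`,
`M1 ⋈ M3 ≈_it M2 ⋈ M3`. -/
theorem infTrace_equiv_congruence_trapless {Q1 Q2 Q3 : Type} (N N3 : Set Name)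
    (M1 : LTS Q1 (Rcd Name Data)) (M2 : LTS Q2 (Rcd Name Data))
    (M3 : LTS Q3 (Rcd Name Data))
    (h1 : ltsOver M1 N) (h2 : ltsOver M2 N) (h3 : ltsOver M3 N3)
    (t1 : trapless M1) (t2 : trapless M2) (t3 : trapless M3)
    (hit : ∀ w : ℕ → Rcd Name Data, infTraceable M1 w ↔ infTraceable M2 w) :
    ∀ w : ℕ → Rcd Name Data,
      infTraceable (joinLTS N N3 M1 M3) w ↔ infTraceable (joinLTS N N3 M2 M3) w := by
  intro w
  constructor
  · exact joinLTS_infTraceable_mono N N3 M1 M2 M3 t1 (fun v => (hit v).mp) w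
  · exact joinLTS_infTraceable_mono N N3 M2 M1 M3 t2 (fun v => (hit v).mpr) w
end

section
/- Language-theoretic characterization of join for infinite traces: for trapless LTSRs M1, M2 over name sets N1, N2, an infinite string w ∈ Rec^ω_{N1∪N2}(D) is traceable in M1 ⋈ M2 if and only if vis(w↓_{N1}) is traceable in M1 (as a finite string if vis(w↓_{N1}) is finite, as an infinite string otherwise) and likewise for vis(w↓_{N2}) in M2. -/
open scoped Classical

variable {Name Data : Type}

variable {Q Q1 Q2 Q3 A : Type}

/-- The indices of `w` at which the restriction to `N` is visible. -/
def visIdx (w : ℕ → Rcd Name Data) (N : Set Name) : Set ℕ :=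
  {i | (recDom (recRestrict (w i) N)).Nonempty}

/-- `vis(w↓_N)` is traceable in `M`: as an infinite string if `vis(w↓_N)` is infinite
(its `k`-th record being the restriction at the `k`-th visible index), and as a finite
string otherwise (the visible portion of a long enough restricted prefix). -/
noncomputable def visTraceable {Q : Type} (M : LTS Q (Rcd Name Data)) (N : Set Name)
    (w : ℕ → Rcd Name Data) : Prop :=
  ((visIdx w N).Infinite ∧
      infTraceable M (fun k => recRestrict (w (Nat.nth (· ∈ visIdx w N) k)) N)) ∨
  ((visIdx w N).Finite ∧
      ∃ n, (∀ m, n ≤ m → recDom (recRestrict (w m) N) = ∅) ∧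
        finTraceable M (visRestrict ((List.range n).map w) N))

/-- Finite runs in an LTS. -/
def FinRun (M : LTS Q A) : Q → List A → Q → Prop
  | q, [], q' => q' = q
  | q, a :: u, q' => ∃ p ∈ M.delta q a, FinRun M p u q'

lemma mem_reachSet {M : LTS Q A} :
    ∀ (u : List A) (S : Set Q) (q' : Q),
      q' ∈ reachSet M S u ↔ ∃ q ∈ S, FinRun M q u q' := by
  intro u
  induction u with
  | nil => intro S q'; simp [reachSet, FinRun, eq_comm]
  | cons a u ih =>
    intro S q'
    simp only [reachSet, ih, FinRun, Set.mem_setOf_eq]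
    constructor
    · rintro ⟨p, ⟨q, hq, hp⟩, hrun⟩
      exact ⟨q, hq, p, hp, hrun⟩
    · rintro ⟨q, hq, p, hp, hrun⟩
      exact ⟨p, ⟨q, hq, hp⟩, hrun⟩

lemma finRun_append {M : LTS Q A} :
    ∀ (u v : List A) (q q'' : Q),
      FinRun M q (u ++ v) q'' ↔ ∃ q', FinRun M q u q' ∧ FinRun M q' v q'' := by
  intro u
  induction u with
  | nil => intro v q q''; simp [FinRun]
  | cons a u ih =>
    intro v q q''
    show (∃ p ∈ M.delta q a, FinRun M p (u ++ v) q'') ↔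
      ∃ q', (∃ p ∈ M.delta q a, FinRun M p u q') ∧ FinRun M q' v q''
    constructor
    · rintro ⟨p, hp, hrun⟩
      obtain ⟨q', h1, h2⟩ := (ih v p q'').1 hrun
      exact ⟨q', ⟨p, hp, h1⟩, h2⟩
    · rintro ⟨q', ⟨p, hp, h1⟩, h2⟩
      exact ⟨p, hp, (ih v p q'').2 ⟨q', h1, h2⟩⟩

/-- A run of a single component projected from a run of the join: it moves on the
restricted record at visible indices and stays put at invisible ones. -/
def ProjRun (M : LTS Q (Rcd Name Data)) (N : Set Name) (w : ℕ → Rcd Name Data)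
    (ρ : ℕ → Q) : Prop :=
  ∀ i, (i ∈ visIdx w N → ρ (i + 1) ∈ M.delta (ρ i) (recRestrict (w i) N)) ∧
       (i ∉ visIdx w N → ρ (i + 1) = ρ i)

lemma visRestrict_range_succ (w : ℕ → Rcd Name Data) (N : Set Name) (n : ℕ) :
    visRestrict ((List.range (n + 1)).map w) N =
      visRestrict ((List.range n).map w) N ++
        (if n ∈ visIdx w N then [recRestrict (w n) N] else []) := by
  classical
  have hmem : (n ∈ visIdx w N) ↔ (recDom (recRestrict (w n) N)).Nonempty := Iff.rfl
  by_cases h : (recDom (recRestrict (w n) N)).Nonempty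
  · rw [if_pos (hmem.2 h)]
    simp [visRestrict, strRestrict, visList, List.range_succ, h]
  · rw [if_neg (fun hc => h (hmem.1 hc))]
    simp [visRestrict, strRestrict, visList, List.range_succ, h]

lemma projRun_finRun {M : LTS Q (Rcd Name Data)} {N : Set Name}
    {w : ℕ → Rcd Name Data} {ρ : ℕ → Q} (h : ProjRun M N w ρ) (n : ℕ) :
    FinRun M (ρ 0) (visRestrict ((List.range n).map w) N) (ρ n) := by
  induction n with
  | zero => simp [visRestrict, strRestrict, visList, FinRun]
  | succ n ih =>
    rw [visRestrict_range_succ, finRun_append]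
    refine ⟨ρ n, ih, ?_⟩
    by_cases hv : n ∈ visIdx w N
    · rw [if_pos hv]
      exact ⟨ρ (n + 1), (h n).1 hv, rfl⟩
    · rw [if_neg hv]
      exact (h n).2 hv

lemma projRun_const {M : LTS Q (Rcd Name Data)} {N : Set Name}
    {w : ℕ → Rcd Name Data} {ρ : ℕ → Q} (h : ProjRun M N w ρ)
    {a b : ℕ} (hab : a ≤ b) (hinv : ∀ m, a ≤ m → m < b → m ∉ visIdx w N) :
    ρ b = ρ a := by
  induction b, hab using Nat.le_induction with
  | base => rfl
  | succ b hab ih =>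
    rw [(h b).2 (hinv b hab (Nat.lt_succ_self b))]
    exact ih fun m hm hm' => hinv m hm (hm'.trans (Nat.lt_succ_self b))

/-- Gap property of `Nat.nth` for an infinite set. -/
lemma nth_gap {p : ℕ → Prop} (hp : (setOf p).Infinite) {m k : ℕ}
    (h1 : Nat.nth p k < m) (h2 : m < Nat.nth p (k + 1)) : ¬ p m := by
  classical
  intro hm
  have hc : Nat.nth p (Nat.count p m) = m := Nat.nth_count hm
  have hk1 : k < Nat.count p m := by
    rw [← Nat.nth_lt_nth hp (k := k) (n := Nat.count p m), hc]; exact h1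
  have hk2 : Nat.count p m < k + 1 := by
    rw [← Nat.nth_lt_nth hp (k := Nat.count p m) (n := k + 1), hc]; exact h2
  omega

lemma nth_gap0 {p : ℕ → Prop} (hp : (setOf p).Infinite) {m : ℕ}
    (h1 : m < Nat.nth p 0) : ¬ p m := by
  classical
  intro hm
  have hc : Nat.nth p (Nat.count p m) = m := Nat.nth_count hm
  have : Nat.nth p 0 ≤ Nat.nth p (Nat.count p m) :=
    (Nat.nth_le_nth hp).2 (Nat.zero_le _)
  omega

lemma exists_projRun_of_finRun {M : LTS Q (Rcd Name Data)} {N : Set Name}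
    {w : ℕ → Rcd Name Data} :
    ∀ (n : ℕ) (q0 qf : Q),
      FinRun M q0 (visRestrict ((List.range n).map w) N) qf →
        ∃ ρ : ℕ → Q, ρ 0 = q0 ∧ ρ n = qf ∧
          ∀ i < n, (i ∈ visIdx w N → ρ (i + 1) ∈ M.delta (ρ i) (recRestrict (w i) N)) ∧
                   (i ∉ visIdx w N → ρ (i + 1) = ρ i) := by
  intro n
  induction n with
  | zero =>
    intro q0 qf h
    simp only [visRestrict, strRestrict, visList, List.range_zero, List.map_nil,
      List.filterMap_nil, FinRun] at h
    exact ⟨fun _ => q0, rfl, h.symm, fun i hi => absurd hi (Nat.not_lt_zero i)⟩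
  | succ n ih =>
    intro q0 qf h
    rw [visRestrict_range_succ, finRun_append] at h
    obtain ⟨q', h1, h2⟩ := h
    obtain ⟨ρ, hρ0, hρn, hstep⟩ := ih q0 q' h1
    refine ⟨fun i => if i ≤ n then ρ i else qf, by simp [hρ0], ?_, ?_⟩
    · show (if n + 1 ≤ n then ρ (n + 1) else qf) = qf
      exact if_neg (by omega)
    · intro i hi
      dsimp only
      rcases Nat.lt_succ_iff_lt_or_eq.1 hi with hi' | rfl
      · rw [if_pos hi'.le, if_pos (show i + 1 ≤ n from hi')]
        exact hstep i hi'
      · rw [if_pos le_rfl, if_neg (show ¬ i + 1 ≤ i by omega), hρn]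
        by_cases hv : i ∈ visIdx w N
        · rw [if_pos hv] at h2
          obtain ⟨p, hp, hpe⟩ := h2
          have hpe' : qf = p := hpe
          refine ⟨fun _ => ?_, fun hni => absurd hv hni⟩
          rw [hpe']; exact hp
        · rw [if_neg hv] at h2
          have h2' : qf = q' := h2
          exact ⟨fun hvi => absurd hvi hv, fun _ => h2'⟩

lemma not_visIdx_iff {w : ℕ → Rcd Name Data} {N : Set Name} {m : ℕ} :
    m ∉ visIdx w N ↔ recDom (recRestrict (w m) N) = ∅ := by
  simp only [visIdx, Set.mem_setOf_eq, Set.not_nonempty_iff_eq_empty]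

/-- Per-component characterization: existence of a projected run iff `vis(w↓_N)`
is traceable. -/
lemma projTraceable_iff_visTraceable {M : LTS Q (Rcd Name Data)} {N : Set Name}
    {w : ℕ → Rcd Name Data} :
    (∃ ρ : ℕ → Q, ρ 0 ∈ M.init ∧ ProjRun M N w ρ) ↔ visTraceable M N w := by
  classical
  constructor
  · rintro ⟨ρ, hinit, hrun⟩
    rcases Set.finite_or_infinite (visIdx w N) with hfin | hinf
    · right
      refine ⟨hfin, ?_⟩
      obtain ⟨n, hn⟩ := hfin.bddAbove
      refine ⟨n + 1, fun m hm => not_visIdx_iff.1 fun hmem => ?_, ?_⟩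
      · exact absurd (hn hmem) (by omega)
      · exact ⟨ρ (n + 1), (mem_reachSet _ _ _).2 ⟨ρ 0, hinit, projRun_finRun hrun (n + 1)⟩⟩
    · left
      refine ⟨hinf, fun k => ρ (Nat.nth (· ∈ visIdx w N) k), ?_, ?_⟩
      · show ρ (Nat.nth (· ∈ visIdx w N) 0) ∈ M.init
        have h0 : ρ (Nat.nth (· ∈ visIdx w N) 0) = ρ 0 :=
          projRun_const hrun (Nat.zero_le _) fun m _ hm => nth_gap0 hinf hm
        rw [h0]; exact hinit
      · intro k
        show ρ (Nat.nth (· ∈ visIdx w N) (k + 1)) ∈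
          M.delta (ρ (Nat.nth (· ∈ visIdx w N) k))
            (recRestrict (w (Nat.nth (· ∈ visIdx w N) k)) N)
        have hmono : Nat.nth (· ∈ visIdx w N) k < Nat.nth (· ∈ visIdx w N) (k + 1) :=
          (Nat.nth_lt_nth hinf).2 (Nat.lt_succ_self k)
        have hconst : ρ (Nat.nth (· ∈ visIdx w N) (k + 1)) = ρ (Nat.nth (· ∈ visIdx w N) k + 1) :=
          projRun_const hrun hmono fun m hm hm' =>
            nth_gap (p := (· ∈ visIdx w N)) hinf (by omega) hm'
        rw [hconst]
        exact (hrun _).1 (Nat.nth_mem_of_infinite hinf k)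
  · rintro (⟨hinf, σ, hinit, hstep⟩ | ⟨hfin, n, hinv, htr⟩)
    · refine ⟨fun i => σ (Nat.count (· ∈ visIdx w N) i), hinit, fun i => ⟨?_, ?_⟩⟩
      · intro hi
        show σ (Nat.count (· ∈ visIdx w N) (i + 1)) ∈
          M.delta (σ (Nat.count (· ∈ visIdx w N) i)) (recRestrict (w i) N)
        have hc : Nat.count (· ∈ visIdx w N) (i + 1) = Nat.count (· ∈ visIdx w N) i + 1 := by
          rw [Nat.count_succ, if_pos hi]
        have hn : Nat.nth (· ∈ visIdx w N) (Nat.count (· ∈ visIdx w N) i) = i :=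
          Nat.nth_count hi
        rw [hc]
        have hst := hstep (Nat.count (· ∈ visIdx w N) i)
        simp only [hn] at hst
        exact hst
      · intro hi
        show σ (Nat.count (· ∈ visIdx w N) (i + 1)) = σ (Nat.count (· ∈ visIdx w N) i)
        have hc : Nat.count (· ∈ visIdx w N) (i + 1) = Nat.count (· ∈ visIdx w N) i := by
          simp [Nat.count_succ, hi]
        rw [hc]
    · obtain ⟨qf, hqf⟩ := htr
      obtain ⟨q0, hq0, hrunf⟩ := (mem_reachSet _ _ _).1 hqf
      obtain ⟨ρ, hρ0, hρn, hstep⟩ := exists_projRun_of_finRun n q0 qf hrunf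
      refine ⟨fun i => if i ≤ n then ρ i else qf, by simp [hρ0, hq0], ?_⟩
      intro i
      dsimp only
      by_cases hi : i < n
      · rw [if_pos hi.le, if_pos (show i + 1 ≤ n from hi)]
        exact hstep i hi
      · have hinv' : i ∉ visIdx w N := not_visIdx_iff.2 (hinv i (by omega))
        refine ⟨fun hvi => absurd hvi hinv', fun _ => ?_⟩
        by_cases hie : i = n
        · subst hie
          rw [if_neg (show ¬ i + 1 ≤ i by omega), if_pos le_rfl, hρn]
        · rw [if_neg (show ¬ i + 1 ≤ n by omega), if_neg (show ¬ i ≤ n by omega)]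

/-- The join run decomposes into two projected runs. -/
lemma join_iff_proj {Q1 Q2 : Type} (N1 N2 : Set Name)
    (M1 : LTS Q1 (Rcd Name Data)) (M2 : LTS Q2 (Rcd Name Data))
    (w : ℕ → Rcd Name Data) :
    infTraceable (joinLTS N1 N2 M1 M2) w ↔
      (∃ ρ1 : ℕ → Q1, ρ1 0 ∈ M1.init ∧ ProjRun M1 N1 w ρ1) ∧
      (∃ ρ2 : ℕ → Q2, ρ2 0 ∈ M2.init ∧ ProjRun M2 N2 w ρ2) := by
  classical
  have key : ∀ (r : Rcd Name Data) (N : Set Name),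
      (recDom r ∩ N).Nonempty ↔ (recDom (recRestrict r N)).Nonempty := by
    intro r N; rw [recDom_recRestrict]
  constructor
  · rintro ⟨ρ, hinit, hstep⟩
    have hmem : ρ 0 ∈ M1.init ×ˢ M2.init := hinit
    constructor
    · refine ⟨fun i => (ρ i).1, hmem.1, fun i => ⟨?_, ?_⟩⟩
      · intro hi
        have := (hstep i).1
        rwa [if_pos ((key (w i) N1).2 hi)] at this
      · intro hi
        have := (hstep i).1
        rw [if_neg (fun hne => hi ((key (w i) N1).1 hne))] at this
        exact this
    · refine ⟨fun i => (ρ i).2, hmem.2, fun i => ⟨?_, ?_⟩⟩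
      · intro hi
        have := (hstep i).2
        rwa [if_pos ((key (w i) N2).2 hi)] at this
      · intro hi
        have := (hstep i).2
        rw [if_neg (fun hne => hi ((key (w i) N2).1 hne))] at this
        exact this
  · rintro ⟨⟨ρ1, h1i, h1s⟩, ⟨ρ2, h2i, h2s⟩⟩
    refine ⟨fun i => (ρ1 i, ρ2 i), Set.mk_mem_prod h1i h2i, fun i => ⟨?_, ?_⟩⟩
    · by_cases hv : (recDom (w i) ∩ N1).Nonempty
      · rw [if_pos hv]
        exact (h1s i).1 ((key (w i) N1).1 hv)
      · rw [if_neg hv]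
        exact (h1s i).2 (fun hvi => hv ((key (w i) N1).2 hvi))
    · by_cases hv : (recDom (w i) ∩ N2).Nonempty
      · rw [if_pos hv]
        exact (h2s i).1 ((key (w i) N2).1 hv)
      · rw [if_neg hv]
        exact (h2s i).2 (fun hvi => hv ((key (w i) N2).2 hvi))

/-- language-theoretic characterization of join for infinite traces: an
infinite string `w ∈ Rec^ω_{N1∪N2}(D)` is traceable in the join of trapless LTSRs
`M1 ⋈ M2` iff `vis(w↓_{N1})` is traceable in `M1` (as a finite or infinite string,
as appropriate) and likewise `vis(w↓_{N2})` in `M2`. -/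
theorem join_infTraceable_iff {Q1 Q2 : Type} (N1 N2 : Set Name)
    (M1 : LTS Q1 (Rcd Name Data)) (M2 : LTS Q2 (Rcd Name Data))
    (h1 : ltsOver M1 N1) (h2 : ltsOver M2 N2)
    (t1 : trapless M1) (t2 : trapless M2)
    (w : ℕ → Rcd Name Data) (hw : ∀ i, recDom (w i) ⊆ N1 ∪ N2) :
    infTraceable (joinLTS N1 N2 M1 M2) w ↔
      visTraceable M1 N1 w ∧ visTraceable M2 N2 w := by
  rw [join_iff_proj, projTraceable_iff_visTraceable, projTraceable_iff_visTraceable]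
end

section
/- Büchi-language equivalence is not a congruence for join: there exist BARs B1, B2 with L_B(B1) = L_B(B2) and a BAR B3 such that L_B(B1 ⋈ B3) ≠ L_B(B2 ⋈ B3). Concretely, take B1 and B2 to be two-state automata q0 ⇄ q1 over a single record a (N1 = N2 = dom(a)), with final set {q1} in B1 and {q0} in B2, and B3 the one-state accepting automaton with a self-loop on a record f with dom(f) disjoint from N1. -/
open scoped Classical

variable {Name Data : Type}

variable {Q Q1 Q2 Q3 A : Type}

/-- The record `a` with domain `{0}` (i.e. `N1 = N2 = dom a = {0}`). -/
noncomputable def aRec : Rcd ℕ Unit := fun n => if n = 0 then some () else none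

/-- The record `f` with domain `{1}`, disjoint from `N1`. -/
noncomputable def fRec : Rcd ℕ Unit := fun n => if n = 1 then some () else none

/-- `B1`: two-state cycle `q0 ⇄ q1` on `a`, initial `q0 = false`, final set `{q1}`. -/
noncomputable def cycleBAR1 : BA Bool (Rcd ℕ Unit) :=
  ⟨fun q r => if r = aRec then {!q} else ∅, {false}, {true}⟩

/-- `B2`: the same cycle, but with final set `{q0}`. -/
noncomputable def cycleBAR2 : BA Bool (Rcd ℕ Unit) :=
  ⟨fun q r => if r = aRec then {!q} else ∅, {false}, {false}⟩

/-- `B3`: the one-state accepting automaton with a self-loop on `f`. -/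
noncomputable def loopBAR3 : BA Unit (Rcd ℕ Unit) :=
  ⟨fun _ r => if r = fRec then Set.univ else ∅, Set.univ, Set.univ⟩

private lemma aDom0 : (recDom aRec ∩ ({0} : Set ℕ)).Nonempty :=
  ⟨0, by simp [recDom, aRec]⟩

private lemma aDom1 : ¬ (recDom aRec ∩ ({1} : Set ℕ)).Nonempty := by
  rintro ⟨n, h1, h2⟩
  simp only [Set.mem_singleton_iff] at h2
  subst h2
  simp [recDom, aRec] at h1

private lemma fDom1 : (recDom fRec ∩ ({1} : Set ℕ)).Nonempty :=
  ⟨1, by simp [recDom, fRec]⟩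

private lemma fDom0 : ¬ (recDom fRec ∩ ({0} : Set ℕ)).Nonempty := by
  rintro ⟨n, h1, h2⟩
  simp only [Set.mem_singleton_iff] at h2
  subst h2
  simp [recDom, fRec] at h1

private lemma aRes : recRestrict aRec ({0} : Set ℕ) = aRec := by
  funext n
  simp only [recRestrict, aRec, Set.mem_singleton_iff]
  by_cases h : n = 0 <;> simp [h]

private lemma fRes : recRestrict fRec ({1} : Set ℕ) = fRec := by
  funext n
  simp only [recRestrict, fRec, Set.mem_singleton_iff]
  by_cases h : n = 1 <;> simp [h]

private lemma aneF : aRec ≠ fRec := by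
  intro h
  have := congrFun h 0
  simp [aRec, fRec] at this

/-- In a run of either cycle automaton, every letter is `aRec` and the run alternates. -/
private lemma cycle_run {ρ : ℕ → Bool} {w : ℕ → Rcd ℕ Unit}
    (h : ∀ i, ρ (i + 1) ∈ (if w i = aRec then ({!ρ i} : Set Bool) else ∅)) :
    ∀ i, ρ (i + 1) = !ρ i := by
  intro i
  have := h i
  by_cases hw : w i = aRec
  · simpa [hw] using this
  · simp [hw] at this

private lemma cycle_parity {ρ : ℕ → Bool} (h0 : ρ 0 = false)
    (h : ∀ i, ρ (i + 1) = !ρ i) : ∀ i, ρ i = decide (i % 2 = 1) := by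
  intro i
  induction i with
  | zero => simpa using h0
  | succ n ih =>
    rw [h n, ih]
    rcases Nat.even_or_odd n with he | ho
    · have h1 : n % 2 = 0 := Nat.even_iff.mp he
      have h2 : (n + 1) % 2 = 1 := Nat.odd_iff.mp (Even.add_one he)
      simp [h1, h2]
    · have h1 : n % 2 = 1 := Nat.odd_iff.mp ho
      have h2 : (n + 1) % 2 = 0 := Nat.even_iff.mp (Odd.add_one ho)
      simp [h1, h2]

/-- Büchi-language equivalence is not a congruence for join: the concrete
BARs `B1`, `B2` above have the same Büchi language, yet joining with `B3` (over the
disjoint name set `{1}`) yields different Büchi languages. -/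
theorem LB_equiv_not_congruence :
    (∀ w : ℕ → Rcd ℕ Unit, cycleBAR1.LB w ↔ cycleBAR2.LB w) ∧
    ¬ ∀ w : ℕ → Rcd ℕ Unit,
        joinLB {0} {1} cycleBAR1 loopBAR3 w ↔ joinLB {0} {1} cycleBAR2 loopBAR3 w := by
  constructor
  · intro w
    constructor
    · rintro ⟨ρ, hinit, hstep, _⟩
      refine ⟨ρ, hinit, hstep, fun n => ⟨2 * n, by omega, ?_⟩⟩
      have h0 : ρ 0 = false := hinit
      have hp := cycle_parity h0 (cycle_run hstep)
      have : (2 * n) % 2 = 0 := by omega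
      simp [cycleBAR2, hp (2 * n), this]
    · rintro ⟨ρ, hinit, hstep, _⟩
      refine ⟨ρ, hinit, hstep, fun n => ⟨2 * n + 1, by omega, ?_⟩⟩
      have h0 : ρ 0 = false := hinit
      have hp := cycle_parity h0 (cycle_run hstep)
      have : (2 * n + 1) % 2 = 1 := by omega
      simp [cycleBAR1, hp (2 * n + 1), this]
  · intro hcon
    set w : ℕ → Rcd ℕ Unit := fun i => if i = 0 then aRec else fRec with hw
    have h1 : joinLB {0} {1} cycleBAR1 loopBAR3 w := by
      refine ⟨fun i => (decide (i ≠ 0), ()), ⟨rfl, trivial⟩, ?_, ?_, ?_⟩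
      · intro i
        constructor
        · by_cases hi : i = 0
          · subst hi
            simp only [hw]
            simp only [if_true]
            rw [if_pos aDom0, aRes]
            simp [cycleBAR1]
          · simp only [hw]
            rw [if_neg hi, if_neg fDom0]
            simp [hi]
        · by_cases hi : i = 0
          · subst hi
            simp only [hw]
            simp only [if_true]
            rw [if_neg aDom1]
            rfl
          · simp only [hw]
            rw [if_neg hi, if_pos fDom1, fRes]
            simp [loopBAR3, aneF.symm]
      · intro n
        exact ⟨n + 1, by omega, by simp [cycleBAR1]⟩
      · intro n
        exact ⟨n, le_refl n, trivial⟩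
    have h2 := (hcon w).mp h1
    obtain ⟨ρ, hinit, hstep, hfin, _⟩ := h2
    -- in B2's join, the first component is true for all m ≥ 1
    have h0 : (ρ 0).1 = false := hinit.1
    have hρ1 : (ρ 1).1 = true := by
      have := (hstep 0).1
      simp only [hw, if_true] at this
      rw [if_pos aDom0, aRes] at this
      simp [cycleBAR2, h0] at this
      exact this
    have hstay : ∀ m, 1 ≤ m → (ρ m).1 = true := by
      intro m hm
      induction m with
      | zero => omega
      | succ n ih =>
        by_cases hn : n = 0
        · subst hn; exact hρ1
        · have hn1 : 1 ≤ n := by omega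
          have := (hstep n).1
          simp only [hw] at this
          rw [if_neg hn, if_neg fDom0] at this
          simp only [Set.mem_singleton_iff] at this
          rw [this, ih hn1]
    obtain ⟨m, hm, hmf⟩ := hfin 1
    have : (ρ m).1 = false := hmf
    rw [hstay m hm] at this
    simp at this
end
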